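/- Let a_L be the Liouville 1-form on ℝ², a_L(x,y)(v) = x·v₂, with vector field X_L(x,y) = (−x, 0) spanning its kernel away from {x=0}. Let f be a smooth function near 0 ∈ ℝ² with f(0,0) = 0, ∂f/∂x(0,0) ≠ 0 and ∂f/∂y(0,0) ≠ 0 (so the zero curve of f is regular at the origin and transversal to both coordinate axes). Then there exist a local diffeomorphism φ at 0 with φ(0) = 0 and smooth nonvanishing functions κ, λ near 0 such that a_L = κ·φ*(a_L) and f = λ·((x + y) ∘ φ) near the origin. Consequently f·X_L is orbitally a_L-conjugate to (x + y)·X_L. -/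

import Mathlib

/-!
Extend `f` to a smooth `g` on the whole plane. Hadamard's lemma writes
`g(x, y) = g(0, y) + x A(x, y)` with `A(x, y) = ∫₀¹ ∂ₓg(tx, y) dt`, so
`φ(x, y) = (x A(x, y), g(0, y))` satisfies `g = (x + y) ∘ φ`. Since `φ₂` depends on `y` alone,
`φ*(x dy) = A(x, y) ∂_y g(0, y) · x dy`, and `A(0) = ∂ₓf(0)`, `∂_y g(0) = ∂_y f(0)` are nonzero.
The Jacobian of `φ` is upper triangular with diagonal `(∂ₓφ₁, ∂_y g(0, y))`, so near `0` it is
invertible and maps `X_L` to `∂ₓφ₁ · X_L`, while `X_L ∘ φ = A · X_L`: this is the orbital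
conjugacy, with time change `∂ₓφ₁ / A`.
-/

noncomputable section

/-- The Liouville 1-form `a_L(x,y)(v) = x·v₂`. -/
def aL : ℝ × ℝ → ((ℝ × ℝ) →L[ℝ] ℝ) :=
  fun p => p.1 • ContinuousLinearMap.snd ℝ ℝ ℝ

/-- The vector field `X_L(x,y) = (−x, 0)` spanning the kernel of the Liouville
1-form away from `{x = 0}`. -/
def XL : ℝ × ℝ → ℝ × ℝ := fun p => (-p.1, 0)

open intervalIntegral Metric Set Topology ContinuousLinearMap

universe u

theorem hasFDerivAt_intervalIntegral_param {P E : Type*} [NormedAddCommGroup P]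
    [NormedSpace ℝ P] [ProperSpace P] [NormedAddCommGroup E] [NormedSpace ℝ E] [CompleteSpace E]
    {H : ℝ × P → E} (hH : ContDiff ℝ 1 H) (a b : ℝ) (x₀ : P) :
    HasFDerivAt (fun p => ∫ t in a..b, H (t, p))
      (∫ t in a..b, (fderiv ℝ H (t, x₀)).comp (inr ℝ ℝ P)) x₀ := by
  set H' : ℝ × P → P →L[ℝ] E := fun z => (fderiv ℝ H z).comp (inr ℝ ℝ P)
  have hH' : Continuous H' := (hH.continuous_fderiv one_ne_zero).clm_comp continuous_const
  obtain ⟨C, hC⟩ : ∃ C, ∀ z ∈ uIcc a b ×ˢ closedBall x₀ 1, ‖H' z‖ ≤ C :=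
    (isCompact_uIcc.prod (isCompact_closedBall _ _)).exists_bound_of_continuousOn hH'.continuousOn
  refine hasFDerivAt_integral_of_dominated_of_fderiv_le (F := fun x t => H (t, x))
    (F' := fun x t => H' (t, x)) (bound := fun _ => C) (ball_mem_nhds x₀ one_pos) ?_ ?_ ?_ ?_
    intervalIntegrable_const ?_
  · exact .of_forall fun x => (hH.continuous.comp (by fun_prop)).aestronglyMeasurable
  · exact (hH.continuous.comp (by fun_prop)).intervalIntegrable a b
  · exact (hH'.comp (by fun_prop)).aestronglyMeasurable
  · exact .of_forall fun t ht x hx => hC (t, x) ⟨uIoc_subset_uIcc ht, ball_subset_closedBall hx⟩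
  · exact .of_forall fun t _ x _ =>
      (hH.differentiable one_ne_zero (t, x)).hasFDerivAt.comp x (hasFDerivAt_prodMk_right t x)

theorem ContDiff.intervalIntegral_param {P E : Type u} [NormedAddCommGroup P] [NormedSpace ℝ P]
    [ProperSpace P] [NormedAddCommGroup E] [NormedSpace ℝ E] [CompleteSpace E]
    {H : ℝ × P → E} {n : ℕ} (hH : ContDiff ℝ n H) (a b : ℝ) :
    ContDiff ℝ n (fun p => ∫ t in a..b, H (t, p)) := by
  induction n generalizing E with
  | zero =>
    exact contDiff_zero.2 <| continuous_parametric_intervalIntegral_of_continuous'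
      (f := fun p t => H (t, p)) (hH.continuous.comp continuous_swap) a b
  | succ n ih =>
    have hderiv := hasFDerivAt_intervalIntegral_param (hH.of_le (by simp)) a b
    rw [Nat.cast_add_one, contDiff_succ_iff_fderiv]
    refine ⟨fun x₀ => (hderiv x₀).differentiableAt, by simp, ?_⟩
    rw [funext fun x₀ => (hderiv x₀).fderiv]
    exact ih ((hH.fderiv_right (m := n) le_rfl).clm_comp contDiff_const)

section Hadamard

variable {P E : Type u} [NormedAddCommGroup P] [NormedSpace ℝ P]
  [NormedAddCommGroup E] [NormedSpace ℝ E] [CompleteSpace E]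

def hadamardQuot (g : ℝ × P → E) (p : ℝ × P) : E :=
  ∫ t in (0 : ℝ)..1, fderiv ℝ g (t * p.1, p.2) (1, 0)

theorem ContDiff.hadamardQuot [ProperSpace P] {g : ℝ × P → E} {n : ℕ∞}
    (hg : ContDiff ℝ (n + 1) g) : ContDiff ℝ n (hadamardQuot g) := by
  refine contDiff_iff_forall_nat_le.2 fun m hm => ?_
  have hH : ContDiff ℝ m fun z : ℝ × ℝ × P => fderiv ℝ g (z.1 * z.2.1, z.2.2) (1, 0) :=
    ((hg.fderiv_right (by gcongr; exact_mod_cast hm)).comp (by fun_prop)).clm_apply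
      contDiff_const
  exact hH.intervalIntegral_param 0 1

theorem fst_smul_hadamardQuot {g : ℝ × P → E} (hg : ContDiff ℝ 1 g) (p : ℝ × P) :
    p.1 • hadamardQuot g p = g p - g (0, p.2) := by
  have hderiv : ∀ t : ℝ, HasDerivAt (fun t => g (t * p.1, p.2))
      (p.1 • fderiv ℝ g (t * p.1, p.2) (1, 0)) t := by
    intro t
    have hline : HasDerivAt (fun t : ℝ => (t * p.1, p.2)) (p.1 • ((1 : ℝ), (0 : P))) t := by
      convert (hasDerivAt_mul_const p.1).prodMk (hasDerivAt_const t p.2) using 1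
      simp
    rw [← map_smul]
    exact ((hg.differentiable one_ne_zero) _).hasFDerivAt.comp_hasDerivAt t hline
  have hcont : Continuous fun t : ℝ => p.1 • fderiv ℝ g (t * p.1, p.2) (1, 0) :=
    continuous_const.smul (((hg.continuous_fderiv one_ne_zero).comp (by fun_prop)).clm_apply
      continuous_const)
  have := integral_eq_sub_of_hasDerivAt (fun t _ => hderiv t) (hcont.intervalIntegrable 0 1)
  rw [intervalIntegral.integral_smul] at this
  simpa [hadamardQuot] using this

theorem hadamardQuot_mk_zero (g : ℝ × P → E) (y : P) :
    hadamardQuot g (0, y) = fderiv ℝ g (0, y) (1, 0) := by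
  simp [hadamardQuot]

end Hadamard

theorem ContDiffOn.exists_contDiff_eventuallyEq {E F : Type*} [NormedAddCommGroup E]
    [NormedSpace ℝ E] [HasContDiffBump E] [NormedAddCommGroup F] [NormedSpace ℝ F]
    {U : Set E} {x : E} {f : E → F} {n : ℕ∞} (hf : ContDiffOn ℝ n f U) (hU : IsOpen U)
    (hx : x ∈ U) : ∃ g : E → F, ContDiff ℝ n g ∧ g =ᶠ[𝓝 x] f := by
  obtain ⟨ε, hε, hball⟩ := Metric.isOpen_iff.1 hU x hx
  let χ : ContDiffBump x := ⟨ε / 4, ε / 2, by positivity, by linarith⟩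
  have hsupp : tsupport χ ⊆ U := by
    rw [χ.tsupport_eq]
    exact (closedBall_subset_ball (by simp [χ]; linarith)).trans hball
  refine ⟨fun p => χ p • f p, contDiff_iff_contDiffAt.2 fun p => ?_, ?_⟩
  · by_cases hp : p ∈ U
    · exact χ.contDiffAt.smul (hf.contDiffAt (hU.mem_nhds hp))
    · refine contDiffAt_const (c := (0 : F)).congr_of_eventuallyEq ?_
      filter_upwards [(isClosed_tsupport χ).isOpen_compl.mem_nhds fun h => hp (hsupp h)] with q hq
      simp [image_eq_zero_of_notMem_tsupport hq]
  · filter_upwards [closedBall_mem_nhds x (by positivity : 0 < ε / 4)] with q hq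
    simp [χ.one_of_mem_closedBall hq]

theorem ContinuousLinearMap.det_prod_smul_snd (L : ℝ × ℝ →L[ℝ] ℝ) (d : ℝ) :
    (L.prod (d • snd ℝ ℝ ℝ)).det = L (1, 0) * d := by
  rw [ContinuousLinearMap.det, ← LinearMap.det_toMatrix (Module.Basis.finTwoProd ℝ),
    Matrix.det_fin_two]
  simp [LinearMap.toMatrix_apply]

theorem ContinuousLinearMap.inverse_apply_of_apply_eq_smul {V : Type*} [NormedAddCommGroup V]
    [NormedSpace ℝ V] [FiniteDimensional ℝ V] {T : V →L[ℝ] V} (hT : T.det ≠ 0) {u : V} {a : ℝ}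
    (ha : a ≠ 0) (hu : T u = a • u) : T.inverse u = a⁻¹ • u := by
  have hinv : T.IsInvertible :=
    ⟨T.toContinuousLinearEquivOfDetNeZero hT, T.coe_toContinuousLinearEquivOfDetNeZero hT⟩
  rw [← hinv.inverse_apply_self (a⁻¹ • u), map_smul, hu, smul_smul, inv_mul_cancel₀ ha, one_smul]

def straighteningMap (g : ℝ × ℝ → ℝ) (p : ℝ × ℝ) : ℝ × ℝ :=
  (p.1 * hadamardQuot g p, g (0, p.2))

def straighteningDomain (g : ℝ × ℝ → ℝ) : Set (ℝ × ℝ) :=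
  {p | hadamardQuot g p ≠ 0 ∧ (fderiv ℝ (straighteningMap g) p (1, 0)).1 ≠ 0 ∧
    fderiv ℝ g (0, p.2) (0, 1) ≠ 0}

def straighteningConformalFactor (g : ℝ × ℝ → ℝ) (p : ℝ × ℝ) : ℝ :=
  (hadamardQuot g p * fderiv ℝ g (0, p.2) (0, 1))⁻¹

def straighteningTimeScale (g : ℝ × ℝ → ℝ) (p : ℝ × ℝ) : ℝ :=
  (fderiv ℝ (straighteningMap g) p (1, 0)).1 / hadamardQuot g p

section Straightening

variable {g : ℝ × ℝ → ℝ}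

theorem straighteningMap_fst_add_snd (hg : ContDiff ℝ 1 g) (p : ℝ × ℝ) :
    (straighteningMap g p).1 + (straighteningMap g p).2 = g p := by
  have := fst_smul_hadamardQuot hg p
  simp only [straighteningMap, smul_eq_mul] at this ⊢
  linarith

theorem straighteningMap_zero (hg0 : g 0 = 0) : straighteningMap g 0 = 0 := by
  simp [straighteningMap, Prod.mk_zero_zero, hg0]

theorem contDiff_straighteningMap {n : ℕ∞} (hg : ContDiff ℝ (n + 1) g) :
    ContDiff ℝ n (straighteningMap g) :=
  (contDiff_fst.mul hg.hadamardQuot).prodMk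
    ((hg.of_le (by simp)).comp (contDiff_const.prodMk contDiff_snd))

theorem hasFDerivAt_straighteningMap (hg : ContDiff ℝ 2 g) (p : ℝ × ℝ) :
    HasFDerivAt (straighteningMap g)
      ((hadamardQuot g p • fst ℝ ℝ ℝ + p.1 • fderiv ℝ (hadamardQuot g) p).prod
        (fderiv ℝ g (0, p.2) (0, 1) • snd ℝ ℝ ℝ)) p := by
  have hA : Differentiable ℝ (hadamardQuot g) :=
    (ContDiff.hadamardQuot (n := 1) hg).differentiable one_ne_zero
  have hsnd : HasFDerivAt (fun x : ℝ × ℝ => g (0, x.2))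
      ((fderiv ℝ g (0, p.2)).comp ((0 : ℝ × ℝ →L[ℝ] ℝ).prod (snd ℝ ℝ ℝ))) p :=
    ((hg.differentiable two_ne_zero) _).hasFDerivAt.comp p
      ((hasFDerivAt_const 0 p).prodMk hasFDerivAt_snd)
  refine ((hasFDerivAt_fst.mul (hA p).hasFDerivAt).prodMk hsnd).congr_fderiv ?_
  ext <;> simp [add_comm, Prod.mk_zero_zero]

theorem isOpen_straighteningDomain (hg : ContDiff ℝ 2 g) : IsOpen (straighteningDomain g) := by
  have hA : Continuous (hadamardQuot g) := (ContDiff.hadamardQuot (n := 1) hg).continuous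
  have hα : Continuous fun p => (fderiv ℝ (straighteningMap g) p (1, 0)).1 :=
    (((contDiff_straighteningMap (n := 1) hg).continuous_fderiv one_ne_zero).clm_apply
      continuous_const).fst
  have hδ : Continuous fun p : ℝ × ℝ => fderiv ℝ g (0, p.2) (0, 1) :=
    ((hg.continuous_fderiv two_ne_zero).comp (by fun_prop)).clm_apply continuous_const
  exact (isOpen_ne_fun hA continuous_const).inter
    ((isOpen_ne_fun hα continuous_const).inter (isOpen_ne_fun hδ continuous_const))

theorem zero_mem_straighteningDomain (hg : ContDiff ℝ 2 g) (hgx : fderiv ℝ g 0 (1, 0) ≠ 0)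
    (hgy : fderiv ℝ g 0 (0, 1) ≠ 0) : (0 : ℝ × ℝ) ∈ straighteningDomain g := by
  have hA0 : hadamardQuot g 0 = fderiv ℝ g 0 (1, 0) := by
    simpa [Prod.mk_zero_zero] using hadamardQuot_mk_zero g 0
  refine ⟨hA0 ▸ hgx, ?_, by simpa [Prod.mk_zero_zero] using hgy⟩
  rw [(hasFDerivAt_straighteningMap hg 0).fderiv]
  simpa [hA0] using hgx

theorem det_fderiv_straighteningMap_ne_zero (hg : ContDiff ℝ 2 g) {p : ℝ × ℝ}
    (hp : p ∈ straighteningDomain g) : (fderiv ℝ (straighteningMap g) p).det ≠ 0 := by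
  rw [(hasFDerivAt_straighteningMap hg p).fderiv, det_prod_smul_snd]
  exact mul_ne_zero (by simpa [(hasFDerivAt_straighteningMap hg p).fderiv] using hp.2.1) hp.2.2

theorem aL_eq_straighteningConformalFactor_smul (hg : ContDiff ℝ 2 g) {p : ℝ × ℝ}
    (hp : p ∈ straighteningDomain g) :
    aL p = straighteningConformalFactor g p •
      (aL (straighteningMap g p)).comp (fderiv ℝ (straighteningMap g) p) := by
  have hpull : (aL (straighteningMap g p)).comp (fderiv ℝ (straighteningMap g) p) =
      (hadamardQuot g p * fderiv ℝ g (0, p.2) (0, 1)) • aL p := by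
    rw [(hasFDerivAt_straighteningMap hg p).fderiv]
    refine ContinuousLinearMap.ext fun v => ?_
    simp [aL, straighteningMap]
    ring
  rw [hpull, straighteningConformalFactor, smul_smul, inv_mul_cancel₀ (mul_ne_zero hp.1 hp.2.2),
    one_smul]

theorem contDiffOn_straighteningConformalFactor {n : ℕ∞} (hg : ContDiff ℝ (n + 1) g) :
    ContDiffOn ℝ n (straighteningConformalFactor g) (straighteningDomain g) := by
  have hδ : ContDiff ℝ n fun p : ℝ × ℝ => fderiv ℝ g (0, p.2) (0, 1) :=
    ((hg.fderiv_right le_rfl).comp (contDiff_const.prodMk contDiff_snd)).clm_apply contDiff_const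
  exact (hg.hadamardQuot.mul hδ).contDiffOn.inv fun p hp => mul_ne_zero hp.1 hp.2.2

theorem straighteningConformalFactor_ne_zero {p : ℝ × ℝ} (hp : p ∈ straighteningDomain g) :
    straighteningConformalFactor g p ≠ 0 :=
  inv_ne_zero (mul_ne_zero hp.1 hp.2.2)

theorem contDiffOn_straighteningTimeScale {n : ℕ∞} (hg : ContDiff ℝ (n + 1 + 1) g) :
    ContDiffOn ℝ n (straighteningTimeScale g) (straighteningDomain g) := by
  have hα : ContDiff ℝ n fun p => (fderiv ℝ (straighteningMap g) p (1, 0)).1 :=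
    (((contDiff_straighteningMap hg).fderiv_right le_rfl).clm_apply contDiff_const).fst
  exact hα.contDiffOn.div (hg.of_le (by simp)).hadamardQuot.contDiffOn fun p hp => hp.1

theorem straighteningTimeScale_ne_zero {p : ℝ × ℝ} (hp : p ∈ straighteningDomain g) :
    straighteningTimeScale g p ≠ 0 :=
  div_ne_zero hp.2.1 hp.1

theorem smul_XL_eq_straighteningTimeScale_smul (hg : ContDiff ℝ 2 g) {p : ℝ × ℝ}
    (hp : p ∈ straighteningDomain g) (c : ℝ) :
    c • XL p = straighteningTimeScale g p •
      (fderiv ℝ (straighteningMap g) p).inverse (c • XL (straighteningMap g p)) := by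
  have hXL : fderiv ℝ (straighteningMap g) p (XL p) =
      (fderiv ℝ (straighteningMap g) p (1, 0)).1 • XL p := by
    have : XL p = (-p.1) • ((1 : ℝ), (0 : ℝ)) := by simp [XL]
    rw [this, map_smul, (hasFDerivAt_straighteningMap hg p).fderiv]
    ext <;> simp [mul_comm]
  have hXLφ : XL (straighteningMap g p) = hadamardQuot g p • XL p := by
    ext <;> simp [XL, straighteningMap, mul_comm]
  rw [hXLφ, smul_smul, map_smul, inverse_apply_of_apply_eq_smul
    (det_fderiv_straighteningMap_ne_zero hg hp) hp.2.1 hXL, smul_smul, smul_smul,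
    straighteningTimeScale]
  congr 1
  field_simp [hp.1, hp.2.1]

end Straightening

/-- If `f` is smooth near `0 ∈ ℝ²` with `f(0,0) = 0`, `∂f/∂x(0,0) ≠ 0` and
`∂f/∂y(0,0) ≠ 0` (zero curve regular at the origin and transversal to both axes),
then there are a local diffeomorphism `φ` fixing `0` and smooth nonvanishing
`κ, λ` with `a_L = κ·φ*(a_L)` and `f = λ·((x+y) ∘ φ)` near the origin.
Consequently `f·X_L` is orbitally `a_L`-conjugate to `(x+y)·X_L`. -/
theorem stmt_13 (U : Set (ℝ × ℝ)) (hUo : IsOpen U) (hU0 : (0 : ℝ × ℝ) ∈ U)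
    (f : ℝ × ℝ → ℝ) (hf : ContDiffOn ℝ (⊤ : ℕ∞) f U)
    (hf0 : f 0 = 0)
    (hfx : fderiv ℝ f 0 (1, 0) ≠ 0) (hfy : fderiv ℝ f 0 (0, 1) ≠ 0) :
    ∃ (φ : ℝ × ℝ → ℝ × ℝ) (W : Set (ℝ × ℝ)) (κ lam : ℝ × ℝ → ℝ),
      IsOpen W ∧ (0 : ℝ × ℝ) ∈ W ∧ φ 0 = 0 ∧
      ContDiffOn ℝ (⊤ : ℕ∞) φ W ∧ (∀ p ∈ W, (fderiv ℝ φ p).det ≠ 0) ∧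
      ContDiffOn ℝ (⊤ : ℕ∞) κ W ∧ (∀ p ∈ W, κ p ≠ 0) ∧
      ContDiffOn ℝ (⊤ : ℕ∞) lam W ∧ (∀ p ∈ W, lam p ≠ 0) ∧
      -- a_L = κ·φ*(a_L)
      (∀ p ∈ W, aL p = κ p • ((aL (φ p)).comp (fderiv ℝ φ p))) ∧
      -- f = λ·((x+y) ∘ φ)
      (∀ p ∈ W, f p = lam p * ((φ p).1 + (φ p).2)) ∧
      -- consequently f·X_L is orbitally a_L-conjugate to (x+y)·X_L
      (∃ μ : ℝ × ℝ → ℝ, ContDiffOn ℝ (⊤ : ℕ∞) μ W ∧ (∀ p ∈ W, μ p ≠ 0) ∧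
        ∀ p ∈ W, f p • XL p =
          μ p • (fderiv ℝ φ p).inverse (((φ p).1 + (φ p).2) • XL (φ p))) := by
  obtain ⟨g, hg, hgf⟩ := hf.exists_contDiff_eventuallyEq hUo hU0
  obtain ⟨V, hVf, hVo, hV0⟩ := _root_.mem_nhds_iff.1 hgf
  have hg2 : ContDiff ℝ 2 g := hg.of_le (WithTop.coe_le_coe.2 le_top)
  have hfg : fderiv ℝ g 0 = fderiv ℝ f 0 := hgf.fderiv_eq
  refine ⟨straighteningMap g, V ∩ straighteningDomain g, straighteningConformalFactor g,
    fun _ => 1, hVo.inter (isOpen_straighteningDomain hg2),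
    ⟨hV0, zero_mem_straighteningDomain hg2 (hfg ▸ hfx) (hfg ▸ hfy)⟩,
    straighteningMap_zero (hgf.eq_of_nhds.trans hf0),
    (contDiff_straighteningMap (hg.of_le (by simp))).contDiffOn,
    fun p hp => det_fderiv_straighteningMap_ne_zero hg2 hp.2,
    (contDiffOn_straighteningConformalFactor (hg.of_le (by simp))).mono inter_subset_right,
    fun p hp => straighteningConformalFactor_ne_zero hp.2, contDiffOn_const,
    fun _ _ => one_ne_zero, fun p hp => aL_eq_straighteningConformalFactor_smul hg2 hp.2,
    fun p hp => ?_, straighteningTimeScale g,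
    (contDiffOn_straighteningTimeScale (hg.of_le (by simp))).mono inter_subset_right,
    fun p hp => straighteningTimeScale_ne_zero hp.2, fun p hp => ?_⟩
  · rw [one_mul, straighteningMap_fst_add_snd (hg2.of_le one_le_two), hVf hp.1]
  · rw [straighteningMap_fst_add_snd (hg2.of_le one_le_two), hVf hp.1]
    exact smul_XL_eq_straighteningTimeScale_smul hg2 hp.2 (f p)
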